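/- Let p be a strictly positive function on {0,1}^n, n ≥ 1, and let there be no relation such that for all x in a proper nonempty S and all i with f_i(x) ∉ S, both strict inequalities p(f_{≤i-1}(x)) < p(f_{≤i}(x)) and p(f_{≥i}(x)) < p(f_{≥i+1}(x)) hold. Formally: for every proper nonempty S ⊂ {0,1}^n there exist x ∈ S and i with f_i(x) ∉ S such that p(f_{≤i-1}(x)) ≥ p(f_{≤i}(x)) or p(f_{≥i}(x)) ≥ p(f_{≥i+1}(x)). -/
import Mathlib


open Matrix

/-- Flip the `i`-th coordinate of `x`. -/
def flipAt {n : ℕ} (i : Fin n) (x : Fin n → Bool) : Fin n → Bool :=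
  Function.update x i (!x i)

/-- Flip the first `k` coordinates of `x` (1-indexed coordinates `1..k`). -/
def fle {n : ℕ} (k : ℕ) (x : Fin n → Bool) : Fin n → Bool :=
  fun j => if j.val < k then !x j else x j

/-- Flip coordinates `k..n` (1-indexed) of `x`; `fge (n+1) x = x`. -/
def fge {n : ℕ} (k : ℕ) (x : Fin n → Bool) : Fin n → Bool :=
  fun j => if k ≤ j.val + 1 then !x j else x j

/-- Modified Metropolis flip probability at site `i`. -/
noncomputable def flipMod {n : ℕ} (p : (Fin n → Bool) → ℝ) (i : Fin n)
    (x : Fin n → Bool) : ℝ :=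
  if p x < p (flipAt i x) then 1
  else if p (flipAt i x) < p x then p (flipAt i x) / p x
  else 1 / 2

/-- Standard Metropolis flip probability at site `i`. -/
noncomputable def flipStd {n : ℕ} (p : (Fin n → Bool) → ℝ) (i : Fin n)
    (x : Fin n → Bool) : ℝ :=
  min 1 (p (flipAt i x) / p x)

/-- Single-site transition matrix of the modified Metropolis operator. -/
noncomputable def Tmod {n : ℕ} (p : (Fin n → Bool) → ℝ) (i : Fin n) :
    Matrix (Fin n → Bool) (Fin n → Bool) ℝ :=
  fun x y =>
    if y = flipAt i x then flipMod p i x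
    else if y = x then 1 - flipMod p i x
    else 0

/-- Single-site transition matrix of the standard Metropolis operator. -/
noncomputable def Tstd {n : ℕ} (p : (Fin n → Bool) → ℝ) (i : Fin n) :
    Matrix (Fin n → Bool) (Fin n → Bool) ℝ :=
  fun x y =>
    if y = flipAt i x then flipStd p i x
    else if y = x then 1 - flipStd p i x
    else 0

/-- Full sweep `T = T_n ∘ ⋯ ∘ T_1` (apply `T_1` first) of the modified operators. -/
noncomputable def sweep {n : ℕ} (p : (Fin n → Bool) → ℝ) :
    Matrix (Fin n → Bool) (Fin n → Bool) ℝ :=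
  (List.ofFn (fun i : Fin n => Tmod p i)).prod

/-- Full sweep of the standard Metropolis operators. -/
noncomputable def sweepStd {n : ℕ} (p : (Fin n → Bool) → ℝ) :
    Matrix (Fin n → Bool) (Fin n → Bool) ℝ :=
  (List.ofFn (fun i : Fin n => Tstd p i)).prod

section Aux
variable {n : ℕ}

def bcomp (x : Fin n → Bool) : Fin n → Bool := fun j => !x j

lemma flipAt_apply (i : Fin n) (x : Fin n → Bool) (j : Fin n) :
    flipAt i x j = if j = i then !x i else x j := by
  simp [flipAt, Function.update_apply]

lemma bcomp_bcomp (x : Fin n → Bool) : bcomp (bcomp x) = x := by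
  funext j; simp [bcomp]

lemma fle_zero' (x : Fin n → Bool) : fle 0 x = x := by
  funext j; simp [fle]

lemma fle_n (x : Fin n → Bool) : fle n x = bcomp x := by
  funext j; simp [fle, bcomp, j.isLt]

lemma fge_eq_bcomp_fle (k : ℕ) (x : Fin n → Bool) :
    fge (k + 1) x = bcomp (fle k x) := by
  funext j
  simp only [fge, fle, bcomp]
  by_cases h : j.val < k
  · rw [if_neg (by omega), if_pos h, Bool.not_not]
  · rw [if_pos (by omega), if_neg h]

lemma fle_flipAt (i : Fin n) (x : Fin n → Bool) :
    fle i.val (flipAt i x) = fle (i.val + 1) x := by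
  funext j
  simp only [fle, flipAt_apply]
  by_cases h : j = i
  · subst h; simp
  · have h' : j.val ≠ i.val := fun hh => h (Fin.ext hh)
    rw [if_neg h]
    by_cases h2 : j.val < i.val
    · rw [if_pos h2, if_pos (by omega)]
    · rw [if_neg h2, if_neg (by omega)]

lemma fle_succ_flipAt (i : Fin n) (x : Fin n → Bool) :
    fle (i.val + 1) (flipAt i x) = fle i.val x := by
  funext j
  simp only [fle, flipAt_apply]
  by_cases h : j = i
  · subst h; simp
  · have h' : j.val ≠ i.val := fun hh => h (Fin.ext hh)
    rw [if_neg h]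
    by_cases h2 : j.val < i.val
    · rw [if_pos (by omega), if_pos h2]
    · rw [if_neg (by omega), if_neg h2]

lemma flipAt_flipAt (i : Fin n) (x : Fin n → Bool) :
    flipAt i (flipAt i x) = x := by
  funext j
  simp only [flipAt_apply]
  by_cases h : j = i
  · subst h; simp
  · simp [h]

lemma exists_step {g : ℕ → Prop} : ∀ n, g 0 → ¬ g n → ∃ k, k < n ∧ g k ∧ ¬ g (k+1)
  | 0, h0, hn => absurd h0 hn
  | (n+1), h0, hn => by
    by_cases h : g n
    · exact ⟨n, Nat.lt_succ_self n, h, hn⟩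
    · obtain ⟨k, hk, hh1, hh2⟩ := exists_step n h0 h
      exact ⟨k, hk.trans (Nat.lt_succ_self n), hh1, hh2⟩

lemma telescope (q : (Fin n → Bool) → ℝ) (x : Fin n → Bool) :
    ∑ i : Fin n, (q (fle (i.val + 1) x) - q (fle i.val x)) = q (fle n x) - q (fle 0 x) := by
  rw [Fin.sum_univ_eq_sum_range (fun k => q (fle (k+1) x) - q (fle k x))]
  exact Finset.sum_range_sub (fun k => q (fle k x)) n

end Aux

/-- Combinatorial core of irreducibility: for every proper nonempty subset `S`
there are `x ∈ S` and `i` with `f_i(x) ∉ S` such that one of the two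
strict chain inequalities fails. -/
theorem stmt15 {n : ℕ} (hn : 1 ≤ n) (p : (Fin n → Bool) → ℝ) (hp : ∀ x, 0 < p x)
    (S : Set (Fin n → Bool)) (h1 : S.Nonempty) (h2 : S ≠ Set.univ) :
    ∃ x ∈ S, ∃ i : Fin n, flipAt i x ∉ S ∧
      (p (fle (i.val + 1) x) ≤ p (fle i.val x) ∨
       p (fge (i.val + 2) x) ≤ p (fge (i.val + 1) x)) := by
  by_contra hc
  push_neg at hc
  classical
  set q : (Fin n → Bool) → ℝ := fun z => p z * p (bcomp z) with hqdef
  set T : Finset (Fin n → Bool) := Finset.univ.filter (· ∈ S) with hT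
  set F : (Fin n → Bool) × Fin n → ℝ :=
    fun a => q (fle (a.2.val + 1) a.1) - q (fle a.2.val a.1) with hF
  -- total sum is zero (telescoping)
  have hzero : ∑ a ∈ T ×ˢ Finset.univ, F a = 0 := by
    rw [Finset.sum_product]
    refine Finset.sum_eq_zero ?_
    intro x _
    have := telescope q x
    simp only [hF]
    rw [this, fle_n, fle_zero']
    simp [hqdef, bcomp_bcomp, mul_comm]
  -- internal part is zero (involution)
  have hint : ∑ a ∈ (T ×ˢ Finset.univ).filter (fun a => flipAt a.2 a.1 ∈ S), F a = 0 := by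
    refine Finset.sum_involution (fun a _ => (flipAt a.2 a.1, a.2)) ?_ ?_ ?_ ?_
    · intro a _
      simp only [hF]
      rw [fle_flipAt, fle_succ_flipAt]
      ring
    · intro a _ hFa hEq
      exfalso
      apply hFa
      have h1' : flipAt a.2 a.1 = a.1 := congrArg Prod.fst hEq
      have key : fle (a.2.val) a.1 = fle (a.2.val + 1) a.1 := by
        conv_lhs => rw [← h1']
        exact fle_flipAt a.2 a.1
      simp only [hF, key, sub_self]
    · intro a ha
      have ha' := Finset.mem_filter.mp ha
      have hx1 : a.1 ∈ S := by
        have := (Finset.mem_product.mp ha'.1).1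
        simpa [hT] using this
      have hx2 : flipAt a.2 a.1 ∈ S := ha'.2
      refine Finset.mem_filter.mpr ⟨Finset.mem_product.mpr ⟨?_, Finset.mem_univ _⟩, ?_⟩
      · simpa [hT] using hx2
      · show flipAt a.2 (flipAt a.2 a.1) ∈ S
        rw [flipAt_flipAt]
        exact hx1
    · intro a ha
      simp only [flipAt_flipAt]
  -- boundary part is positive
  have hbound : 0 < ∑ a ∈ (T ×ˢ Finset.univ).filter (fun a => ¬ flipAt a.2 a.1 ∈ S), F a := by
    apply Finset.sum_pos
    · intro a ha
      simp only [Finset.mem_filter, Finset.mem_product, Finset.mem_univ, and_true, hT,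
        Finset.mem_filter, Finset.mem_univ, true_and] at ha
      obtain ⟨hxS, hfx⟩ := ha
      obtain ⟨hlt1, hlt2⟩ := hc a.1 hxS a.2 hfx
      simp only [hF, hqdef]
      rw [← fge_eq_bcomp_fle, ← fge_eq_bcomp_fle]
      have := mul_lt_mul'' hlt1 hlt2 (hp _).le (hp _).le
      linarith
    · -- boundary nonempty
      obtain ⟨a, haS⟩ := h1
      obtain ⟨b, hbS⟩ : ∃ b, b ∉ S := by
        by_contra h; push_neg at h; exact h2 (Set.eq_univ_of_forall h)
      set path : ℕ → Fin n → Bool := fun k j => if j.val < k then b j else a j with hpath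
      have hp0 : path 0 = a := by funext j; simp [hpath]
      have hpn : path n = b := by funext j; simp [hpath, j.isLt]
      obtain ⟨k, hk, hk1, hk2⟩ := exists_step (g := fun k => path k ∈ S) n
        (show path 0 ∈ S by rw [hp0]; exact haS)
        (show path n ∉ S by rw [hpn]; exact hbS)
      have hab : a ⟨k, hk⟩ ≠ b ⟨k, hk⟩ := by
        intro h
        apply hk2
        have heq : path (k+1) = path k := by
          funext j
          simp only [hpath]
          by_cases hj : j.val < k
          · rw [if_pos (by omega), if_pos hj]
          · by_cases hj' : j.val < k + 1
            · have hjk : j.val = k := by omega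
              have hji : j = (⟨k, hk⟩ : Fin n) := Fin.ext hjk
              rw [if_pos hj', if_neg hj, hji, ← h]
            · rw [if_neg hj', if_neg hj]
        show path (k+1) ∈ S
        rw [heq]; exact hk1
      have hflip : path (k+1) = flipAt ⟨k, hk⟩ (path k) := by
        funext j
        rw [flipAt_apply]
        by_cases hj : j = (⟨k, hk⟩ : Fin n)
        · rw [if_pos hj]
          have hjv : j.val = k := by rw [hj]
          have hkk : ((⟨k, hk⟩ : Fin n) : ℕ) = k := rfl
          simp only [hpath, hkk]
          rw [if_pos (by omega), if_neg (by omega), hj]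
          cases hA : a (⟨k, hk⟩ : Fin n) <;> cases hB : b (⟨k, hk⟩ : Fin n) <;> simp_all
        · have h' : j.val ≠ k := fun hh => hj (Fin.ext hh)
          rw [if_neg hj]
          simp only [hpath]
          by_cases h2' : j.val < k
          · rw [if_pos (by omega), if_pos h2']
          · rw [if_neg (by omega), if_neg h2']
      refine ⟨(path k, ⟨k, hk⟩), Finset.mem_filter.mpr
        ⟨Finset.mem_product.mpr ⟨?_, Finset.mem_univ _⟩, ?_⟩⟩
      · simpa [hT] using hk1
      · show flipAt ⟨k, hk⟩ (path k) ∉ S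
        rw [← hflip]
        exact hk2
  have hsplit := Finset.sum_filter_add_sum_filter_not (T ×ˢ Finset.univ)
      (fun a => flipAt a.2 a.1 ∈ S) F
  rw [hint, hzero] at hsplit
  linarith
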